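/- Let H be a finite simple bipartite graph with parts V and F in which every vertex of F has at least one neighbour in V, and let G be the graph with vertex set V in which two distinct vertices u and v are adjacent if and only if they have a common neighbour in F (that is, G = H²[V]). Then c(G) ≤ c(H). -/

import Mathlib

open SimpleGraph Set

namespace CopsRobbers

variable {V : Type}

/-- One step of a player in the game: stay put or move to an adjacent vertex. -/
def Step (G : SimpleGraph V) (a b : V) : Prop := a = b ∨ G.Adj a b

/-- `u` is within graph distance `d` of `v` in `G`. -/
def WithinDist (G : SimpleGraph V) (d : ℕ) (u v : V) : Prop :=
  ∃ w : G.Walk u v, w.length ≤ d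

/-- `p` cops have a strategy on `G` that guarantees capturing the robber at distance `d`
within finitely many rounds.  A cop strategy is a function `F` from the history of robber
positions to the positions of the `p` cops (`F []` gives the initial placement, chosen
before the robber places himself); the robber is modelled by an arbitrary trajectory
`r : ℕ → V` of vertices, each step staying put or moving along an edge.  Capture happens
if after some robber move, or after the cops' reply to it, some cop is within distance
`d` of the robber. -/
def CopsWin (G : SimpleGraph V) (d p : ℕ) : Prop :=
  ∃ F : List V → Fin p → V,
    (∀ (hist : List V) (x : V) (i : Fin p), Step G (F hist i) (F (hist ++ [x]) i)) ∧
    ∀ r : ℕ → V, (∀ n, Step G (r n) (r (n + 1))) →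
      ∃ (n : ℕ) (i : Fin p),
        WithinDist G d (F (List.ofFn fun m : Fin n => r m.val) i) (r n) ∨
        WithinDist G d (F (List.ofFn fun m : Fin (n + 1) => r m.val) i) (r n)

/-- The distance-`d` cop number of `G`: the least number of cops that can guarantee
capture at distance `d`. -/
noncomputable def copNumber (G : SimpleGraph V) (d : ℕ) : ℕ :=
  sInf { p | CopsWin G d p }

end CopsRobbers
namespace CopsRobbers

/-- A drawing of a finite simple graph in the plane: vertices go to distinct points, every
edge `uv` is drawn as a simple arc `arc u v` (parametrised on `[0,1]`, with
`arc v u` the reverse parametrisation) joining the endpoints, avoiding all vertex points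
in its interior, any two arcs meet in finitely many points, and no non-vertex point lies
on three or more arcs. -/
structure PlaneDrawing {V : Type} (G : SimpleGraph V) where
  vpos : V → ℝ × ℝ
  arc : V → V → ℝ → ℝ × ℝ
  vpos_inj : Function.Injective vpos
  arc_symm : ∀ u v, G.Adj u v → ∀ t : ℝ, arc u v t = arc v u (1 - t)
  arc_cont : ∀ u v, G.Adj u v → ContinuousOn (arc u v) (Set.Icc (0:ℝ) 1)
  arc_start : ∀ u v, G.Adj u v → arc u v 0 = vpos u
  arc_end : ∀ u v, G.Adj u v → arc u v 1 = vpos v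
  arc_injOn : ∀ u v, G.Adj u v → Set.InjOn (arc u v) (Set.Icc (0:ℝ) 1)
  arc_avoid : ∀ u v, G.Adj u v → ∀ t ∈ Set.Ioo (0:ℝ) 1, ∀ w, arc u v t ≠ vpos w
  finite_inter : ∀ u v w x, G.Adj u v → G.Adj w x → s(u, v) ≠ s(w, x) →
    (arc u v '' Set.Icc (0:ℝ) 1 ∩ arc w x '' Set.Icc (0:ℝ) 1).Finite
  no_triple : ∀ pt : ℝ × ℝ, pt ∉ Set.range vpos →
    ∀ u₁ v₁ u₂ v₂ u₃ v₃, G.Adj u₁ v₁ → G.Adj u₂ v₂ → G.Adj u₃ v₃ →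
      s(u₁, v₁) ≠ s(u₂, v₂) → s(u₁, v₁) ≠ s(u₃, v₃) → s(u₂, v₂) ≠ s(u₃, v₃) →
      ¬(pt ∈ arc u₁ v₁ '' Set.Icc (0:ℝ) 1 ∧ pt ∈ arc u₂ v₂ '' Set.Icc (0:ℝ) 1 ∧
        pt ∈ arc u₃ v₃ '' Set.Icc (0:ℝ) 1)

namespace PlaneDrawing

variable {V : Type} {G : SimpleGraph V}

/-- The edges `uv` and `wx` cross in the drawing: they are distinct edges sharing a point
interior to both arcs. -/
def Crosses (D : PlaneDrawing G) (u v w x : V) : Prop :=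
  G.Adj u v ∧ G.Adj w x ∧ s(u, v) ≠ s(w, x) ∧
    ∃ pt : ℝ × ℝ, pt ∈ D.arc u v '' Set.Ioo (0:ℝ) 1 ∧ pt ∈ D.arc w x '' Set.Ioo (0:ℝ) 1

/-- `e` is an uncrossed edge of the drawing. -/
def UncrossedE (D : PlaneDrawing G) (e : Sym2 V) : Prop :=
  ∀ a b w x, s(a, b) = e → ¬D.Crosses a b w x

/-- The set of crossing points lying on the edge `uv`. -/
def crossingPointsOn (D : PlaneDrawing G) (u v : V) : Set (ℝ × ℝ) :=
  { pt | pt ∈ D.arc u v '' Set.Ioo (0:ℝ) 1 ∧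
      ∃ w x, D.Crosses u v w x ∧ pt ∈ D.arc w x '' Set.Ioo (0:ℝ) 1 }

/-- `pt` is a crossing point of the drawing. -/
def IsCrossingPoint (D : PlaneDrawing G) (pt : ℝ × ℝ) : Prop :=
  ∃ u v w x, D.Crosses u v w x ∧ pt ∈ D.arc u v '' Set.Ioo (0:ℝ) 1 ∧
    pt ∈ D.arc w x '' Set.Ioo (0:ℝ) 1

/-- The drawing is `k`-plane: every edge is crossed at most `k` times. -/
def KPlane (D : PlaneDrawing G) (k : ℕ) : Prop :=
  ∀ u v, G.Adj u v → (D.crossingPointsOn u v).Finite ∧ (D.crossingPointsOn u v).ncard ≤ k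

/-- The drawing is 1-plane: every edge is crossed at most once, and (as usual) no two
edges sharing an endpoint cross, so every crossing has four distinct endpoints. -/
def OnePlane (D : PlaneDrawing G) : Prop :=
  D.KPlane 1 ∧ ∀ u v w x, D.Crosses u v w x → u ≠ w ∧ u ≠ x ∧ v ≠ w ∧ v ≠ x

/-- The parameter `X(G)` of the drawing: the least `n` such that for every crossing,
every pair of consecutive endpoints is joined by a path of length at most `n`. -/
noncomputable def Xparam (D : PlaneDrawing G) : ℕ :=
  sInf { n | ∀ u v w x, D.Crosses u v w x → ∀ a b : V, (a = u ∨ a = v) → (b = w ∨ b = x) →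
    ∃ p : G.Walk a b, p.length ≤ n }

/-- The parameter `x(G)` of the drawing: the least `n` such that for every crossing,
some pair of consecutive endpoints is joined by a path of length at most `n`. -/
noncomputable def xparam (D : PlaneDrawing G) : ℕ :=
  sInf { n | ∀ u v w x, D.Crosses u v w x → ∃ a b : V, (a = u ∨ a = v) ∧ (b = w ∨ b = x) ∧
    ∃ p : G.Walk a b, p.length ≤ n }

/-- The subset of the plane covered by the drawing. -/
def image (D : PlaneDrawing G) : Set (ℝ × ℝ) :=
  Set.range D.vpos ∪ ⋃ (u : V) (v : V) (_ : G.Adj u v), D.arc u v '' Set.Icc (0:ℝ) 1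

/-- Faces of the drawing: connected components of the complement. -/
def IsFace (D : PlaneDrawing G) (F : Set (ℝ × ℝ)) : Prop :=
  ∃ z ∉ D.image, F = connectedComponentIn D.imageᶜ z

/-- The subset of the plane covered by the arc of the (unordered) edge `e`. -/
def edgeArcSet (D : PlaneDrawing G) (e : Sym2 V) : Set (ℝ × ℝ) :=
  ⋃ (a : V) (b : V) (_ : G.Adj a b) (_ : s(a, b) = e), D.arc a b '' Set.Icc (0:ℝ) 1

/-- The skeleton of the drawing: the subgraph consisting of all uncrossed edges. -/
def skeleton (D : PlaneDrawing G) : SimpleGraph V where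
  Adj u v := G.Adj u v ∧ D.UncrossedE s(u, v)
  symm := by
    constructor
    intro u v h
    refine ⟨h.1.symm, ?_⟩
    rw [Sym2.eq_swap]
    exact h.2
  loopless := ⟨fun v h => G.irrefl h.1⟩

/-- The subset of the plane covered by the drawing of the skeleton. -/
def skelImage (D : PlaneDrawing G) : Set (ℝ × ℝ) :=
  ⋃ (u : V) (v : V) (_ : G.Adj u v) (_ : D.UncrossedE s(u, v)), D.arc u v '' Set.Icc (0:ℝ) 1

/-- Faces of the skeleton: connected components of the complement of its drawing. -/
def IsSkelFace (D : PlaneDrawing G) (F : Set (ℝ × ℝ)) : Prop :=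
  ∃ z ∉ D.skelImage, F = connectedComponentIn D.skelImageᶜ z

/-- `κ` is a kite path for the crossing of `uv` and `wx` joining the consecutive
endpoints `u` and `w`: a shortest `(u,w)`-path all of whose edges are uncrossed and whose
internal vertices have degree `2`, such that the part of the arc of `uv` from `u` to the
crossing point, the arcs of `κ`, and the part of the arc of `wx` from the crossing point
to `w` together bound a face of the drawing. -/
def IsKitePath (D : PlaneDrawing G) (u v w x : V) (κ : G.Walk u w) : Prop :=
  D.Crosses u v w x ∧ κ.IsPath ∧ (∀ q : G.Walk u w, κ.length ≤ q.length) ∧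
  (∀ e ∈ κ.edges, D.UncrossedE e) ∧
  (∀ y ∈ κ.support, y ≠ u → y ≠ w → (G.neighborSet y).ncard = 2) ∧
  ∃ t s' : ℝ, t ∈ Set.Ioo (0:ℝ) 1 ∧ s' ∈ Set.Ioo (0:ℝ) 1 ∧ D.arc u v t = D.arc w x s' ∧
    ∃ F, D.IsFace F ∧
      frontier F = (D.arc u v '' Set.Icc 0 t) ∪ (⋃ e ∈ κ.edges, D.edgeArcSet e) ∪
        (D.arc w x '' Set.Icc 0 s')

/-- The drawing is kite-augmented: for every crossing and every pair of consecutive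
endpoints there is a kite path joining them. -/
def KiteAugmented (D : PlaneDrawing G) : Prop :=
  ∀ u v w x, D.Crosses u v w x → ∃ κ : G.Walk u w, D.IsKitePath u v w x κ

/-- The face-distance between any two distinct crossing points of the drawing is at
least `f`: every chain of faces `Fc 0, …, Fc (j-1)` linked by vertex or crossing points
`pts 0 = c₁, pts 1, …, pts j = c₂` on the boundaries of consecutive faces (i.e. every
path in the radial graph between the two crossing points) uses at least `f` faces. -/
def FaceDistGe (D : PlaneDrawing G) (f : ℕ) : Prop :=
  ∀ c₁ c₂ : ℝ × ℝ, D.IsCrossingPoint c₁ → D.IsCrossingPoint c₂ → c₁ ≠ c₂ →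
    ∀ (j : ℕ) (Fc : Fin j → Set (ℝ × ℝ)) (pts : Fin (j + 1) → ℝ × ℝ),
      (∀ i, D.IsFace (Fc i)) →
      (∀ i, pts i ∈ Set.range D.vpos ∨ D.IsCrossingPoint (pts i)) →
      pts 0 = c₁ → pts (Fin.last j) = c₂ →
      (∀ i : Fin j, pts i.castSucc ∈ frontier (Fc i) ∧ pts i.succ ∈ frontier (Fc i)) →
      f ≤ j

end PlaneDrawing

end CopsRobbers
namespace CopsRobbers

/-- `H` is (a copy of) the `k`-subdivision `G^(k)` of `G`: `φ` embeds the vertices of `G`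
into those of `H`, and for every ordered adjacent pair `u v` of `G`, the vertices
`p u v 0, p u v 1, …, p u v k` form the path of length `k` of `H` replacing the
edge `uv` (traversed in the opposite direction for `p v u`); the interior vertices
of these paths are fresh and pairwise disjoint for distinct edges, the edges of `H` are
exactly the edges of these paths, and every vertex of `H` arises from `G` or from a
path. -/
structure IsKSubdivision {V W : Type} (G : SimpleGraph V) (k : ℕ) (H : SimpleGraph W)
    (φ : V → W) (p : V → V → ℕ → W) : Prop where
  phi_inj : Function.Injective φ
  start : ∀ u v, G.Adj u v → p u v 0 = φ u
  finish : ∀ u v, G.Adj u v → p u v k = φ v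
  rev : ∀ u v, G.Adj u v → ∀ i ≤ k, p u v i = p v u (k - i)
  inj : ∀ u v, G.Adj u v → ∀ i ≤ k, ∀ j ≤ k, p u v i = p u v j → i = j
  internal : ∀ u v, G.Adj u v → ∀ i, 0 < i → i < k → p u v i ∉ Set.range φ
  disjoint : ∀ u v u' v', G.Adj u v → G.Adj u' v' → s(u, v) ≠ s(u', v') →
    ∀ i j, 0 < i → i < k → 0 < j → j < k → p u v i ≠ p u' v' j
  adj_iff : ∀ a b : W, H.Adj a b ↔ ∃ u v, ∃ _ : G.Adj u v, ∃ i < k,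
    (a = p u v i ∧ b = p u v (i + 1)) ∨ (b = p u v i ∧ a = p u v (i + 1))
  cover : ∀ w : W, (∃ v, w = φ v) ∨ ∃ u v, ∃ _ : G.Adj u v, ∃ i ≤ k, w = p u v i

/-- `H` together with its drawing `DH` is the subdivision `G^(k)` of the drawn graph
`(G, D)`, drawn by placing the subdivision vertices of each edge on its arc, so that the
crossings of `G^(k)` are exactly the crossings of `G`, occurring between subdivision
edges. -/
structure IsDrawnSubdivision {V W : Type} (G : SimpleGraph V) (D : PlaneDrawing G)
    (k : ℕ) (H : SimpleGraph W) (DH : PlaneDrawing H) (φ : V → W)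
    (p : V → V → ℕ → W) : Prop where
  sub : IsKSubdivision G k H φ p
  vpos_eq : ∀ v, DH.vpos (φ v) = D.vpos v
  on_arc : ∀ u v, G.Adj u v → ∀ i ≤ k, DH.vpos (p u v i) ∈ D.arc u v '' Set.Icc (0:ℝ) 1
  arcs_cover : ∀ u v, G.Adj u v →
    (⋃ i ∈ Finset.range k, DH.edgeArcSet s(p u v i, p u v (i + 1))) =
      D.arc u v '' Set.Icc (0:ℝ) 1
  cross_of : ∀ a b c e, DH.Crosses a b c e →
    ∃ u v w x, D.Crosses u v w x ∧ ∃ i < k, ∃ j < k,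
      s(a, b) = s(p u v i, p u v (i + 1)) ∧ s(c, e) = s(p w x j, p w x (j + 1))
  of_cross : ∀ u v w x, D.Crosses u v w x → ∃ i < k, ∃ j < k,
      DH.Crosses (p u v i) (p u v (i + 1)) (p w x j) (p w x (j + 1))

/-- `(H, DH)` is a 1-planarisation of the drawn graph `(G, D)`: a drawn subdivision
`G^(k)` of `G` whose drawing is 1-plane. -/
structure IsOnePlanarisation {V W : Type} (G : SimpleGraph V) (D : PlaneDrawing G)
    (k : ℕ) (H : SimpleGraph W) (DH : PlaneDrawing H) (φ : V → W)
    (p : V → V → ℕ → W) : Prop where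
  drawn : IsDrawnSubdivision G D k H DH φ p
  oneplane : DH.OnePlane

/-- `(K, DK)` is the kite-augmentation of the 1-plane drawn graph `(H, DH)` via the
embedding `ψ`: the drawing of `H` is kept unchanged, and for every crossing and every
pair of consecutive endpoints a new path with fresh internal vertices, of length equal to
the distance of the two endpoints in `H`, is added and drawn so that the resulting
drawing is a kite-augmented 1-plane drawing with the same crossings. -/
structure IsKiteAugmentationOf {W U : Type} {H : SimpleGraph W} (DH : PlaneDrawing H)
    {K : SimpleGraph U} (DK : PlaneDrawing K) (ψ : W → U) : Prop where
  inj : Function.Injective ψ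
  adj_iff : ∀ a b, K.Adj (ψ a) (ψ b) ↔ H.Adj a b
  vpos_eq : ∀ a, DK.vpos (ψ a) = DH.vpos a
  arc_eq : ∀ a b, H.Adj a b → ∀ t ∈ Set.Icc (0:ℝ) 1, DK.arc (ψ a) (ψ b) t = DH.arc a b t
  oneplane : DK.OnePlane
  kite : DK.KiteAugmented
  new_path : ∀ u v w x, DH.Crosses u v w x →
    ∃ κ : K.Walk (ψ u) (ψ w), κ.IsPath ∧ κ.length = H.dist u w ∧
      ∀ y ∈ κ.support, y ≠ ψ u → y ≠ ψ w → y ∉ Set.range ψ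
  new_deg : ∀ z : U, z ∉ Set.range ψ → (K.neighborSet z).ncard = 2
  cross_of : ∀ a b c e, DK.Crosses a b c e →
    ∃ u v w x, DH.Crosses u v w x ∧ s(a, b) = s(ψ u, ψ v) ∧ s(c, e) = s(ψ w, ψ x)

end CopsRobbers

/-!
A robber move `u → v` in `G = H²[A]` is simulated by two moves `u → b → v` in `H` through a
common neighbour `b`. Cop `i` in `G` stands on a vertex of `A` within one step of the last two
positions of cop `i` of a winning strategy in `H`; by bipartiteness, consecutive such vertices
are at distance at most `2` in `H`, so this is a legal move in `G`. Capture at distance `0` is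
equivalent to some cop getting within one step of the robber right after one of his moves
(such a cop pounces and then stays put), and an `H`-cop in that situation leaves its shadow
in `G` within one step of the robber as well.
-/

namespace CopsRobbers

section Game

variable {V : Type} {G : SimpleGraph V} {p : ℕ}

theorem step_refl (a : V) : Step G a a := Or.inl rfl

theorem Step.symm {a b : V} (h : Step G a b) : Step G b a := h.imp Eq.symm fun h => h.symm

theorem withinDist_zero_iff {u v : V} : WithinDist G 0 u v ↔ u = v :=
  ⟨fun ⟨_, hw⟩ => Walk.eq_of_length_eq_zero (Nat.le_zero.mp hw),
    by rintro rfl; exact ⟨.nil, le_rfl⟩⟩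

def IsStrategy (G : SimpleGraph V) (F : List V → Fin p → V) : Prop :=
  ∀ (hist : List V) (x : V) (i : Fin p), Step G (F hist i) (F (hist ++ [x]) i)

def IsTrajectory (G : SimpleGraph V) (r : ℕ → V) : Prop :=
  ∀ n, Step G (r n) (r (n + 1))

def history (r : ℕ → V) (n : ℕ) : List V :=
  List.ofFn fun m : Fin n => r m.val

theorem history_succ (r : ℕ → V) (n : ℕ) : history r (n + 1) = history r n ++ [r n] := by
  rw [history, List.ofFn_succ_last]; rfl

theorem IsStrategy.step_dropLast {F : List V → Fin p → V} (hF : IsStrategy G F)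
    (l : List V) (i : Fin p) : Step G (F l.dropLast i) (F l i) := by
  rcases List.eq_nil_or_concat l with rfl | ⟨l, x, rfl⟩
  · exact step_refl _
  · simpa using hF l x i

variable (G) (F : List V → Fin p → V) (i : Fin p)

open Classical in
/-- The first robber position that cop `i` could step onto right after the robber moved there,
if there is one. -/
noncomputable def pounce (l : List V) : Option V :=
  l.reverseRecOn none fun l x o => o.or (if Step G (F l i) x then some x else none)

/-- Cop `i` plays `F` until it can step onto the robber, does so, and then stays. -/
noncomputable def pounceStrategy (l : List V) (i : Fin p) : V :=
  (pounce G F i l).getD (F l i)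

open Classical in
theorem pounce_append_singleton (l : List V) (x : V) :
    pounce G F i (l ++ [x]) =
      (pounce G F i l).or (if Step G (F l i) x then some x else none) := by
  simp only [pounce, List.reverseRecOn_concat]

variable {G F}

theorem IsStrategy.pounceStrategy (hF : IsStrategy G F) : IsStrategy G (pounceStrategy G F) := by
  intro l x i
  simp only [CopsRobbers.pounceStrategy, pounce_append_singleton]
  rcases pounce G F i l with _ | v
  · by_cases h : Step G (F l i) x
    · simp [h]
    · simpa [h] using hF l x i
  · exact step_refl v

theorem pounceStrategy_catches (r : ℕ → V) :
    ∀ n, (pounce G F i (history r n)).isSome →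
      ∃ m, pounceStrategy G F (history r (m + 1)) i = r m := by
  intro n
  induction n with
  | zero => simp [history, pounce]
  | succ n ih =>
    rw [history_succ, pounce_append_singleton]
    rcases h : pounce G F i (history r n) with _ | v
    · by_cases hs : Step G (F (history r n) i) (r n)
      · exact fun _ => ⟨n, by simp [CopsRobbers.pounceStrategy, history_succ,
          pounce_append_singleton, h, hs]⟩
      · simp [hs]
    · exact fun _ => ih (by simp [h])

theorem copsWin_zero_iff : CopsWin G 0 p ↔ ∃ F : List V → Fin p → V, IsStrategy G F ∧
    ∀ r, IsTrajectory G r → ∃ n i, Step G (F (history r n) i) (r n) := by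
  constructor
  · rintro ⟨F, hF, hwin⟩
    refine ⟨F, hF, fun r hr => ?_⟩
    obtain ⟨n, i, h | h⟩ := hwin r hr <;> rw [withinDist_zero_iff] at h
    · exact ⟨n, i, h ▸ step_refl _⟩
    · exact ⟨n + 1, i, h ▸ hr n⟩
  · rintro ⟨F, hF, hreach⟩
    refine ⟨pounceStrategy G F, hF.pounceStrategy, fun r hr => ?_⟩
    obtain ⟨n, i, h⟩ := hreach r hr
    obtain ⟨m, hm⟩ := pounceStrategy_catches (G := G) (F := F) i r (n + 1) (by
      simp [history_succ, pounce_append_singleton, h])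
    exact ⟨m, i, Or.inr (withinDist_zero_iff.mpr hm)⟩

theorem copsWin_zero_of_dominating (d : Fin p → V) (hd : ∀ v, ∃ i, Step G (d i) v) :
    CopsWin G 0 p :=
  copsWin_zero_iff.mpr ⟨fun _ => d, fun _ _ i => step_refl (d i), fun r _ => ⟨0, hd (r 0)⟩⟩

end Game

section BipartiteSquare

variable {A B : Type} {H : SimpleGraph (A ⊕ B)} {G : SimpleGraph A} {p : ℕ}

theorem eq_of_step_inl_inl (hbipA : ∀ a a' : A, ¬H.Adj (Sum.inl a) (Sum.inl a'))
    {a a' : A} (h : Step H (Sum.inl a) (Sum.inl a')) : a = a' :=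
  h.elim (fun h => Sum.inl_injective h) fun h => absurd h (hbipA a a')

theorem eq_of_step_inr_inr (hbipB : ∀ b b' : B, ¬H.Adj (Sum.inr b) (Sum.inr b'))
    {b b' : B} (h : Step H (Sum.inr b) (Sum.inr b')) : b = b' :=
  h.elim (fun h => Sum.inr_injective h) fun h => absurd h (hbipB b b')

theorem adj_of_step_inl_inr {a : A} {b : B} (h : Step H (Sum.inl a) (Sum.inr b)) :
    H.Adj (Sum.inl a) (Sum.inr b) :=
  h.resolve_left Sum.inl_ne_inr

theorem step_of_adj_of_adj
    (hG : ∀ u v : A, G.Adj u v ↔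
      u ≠ v ∧ ∃ b : B, H.Adj (Sum.inl u) (Sum.inr b) ∧ H.Adj (Sum.inl v) (Sum.inr b))
    {u v : A} {b : B} (hu : H.Adj (Sum.inl u) (Sum.inr b)) (hv : H.Adj (Sum.inl v) (Sum.inr b)) :
    Step G u v := by
  by_cases huv : u = v
  · exact Or.inl huv
  · exact Or.inr ((hG u v).mpr ⟨huv, b, hu, hv⟩)

/-- By parity, two vertices of `A` at distance at most `3` in `H` are at distance at most `2`. -/
theorem step_of_step_step_step (hbipA : ∀ a a' : A, ¬H.Adj (Sum.inl a) (Sum.inl a'))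
    (hbipB : ∀ b b' : B, ¬H.Adj (Sum.inr b) (Sum.inr b'))
    (hG : ∀ u v : A, G.Adj u v ↔
      u ≠ v ∧ ∃ b : B, H.Adj (Sum.inl u) (Sum.inr b) ∧ H.Adj (Sum.inl v) (Sum.inr b))
    {a a' : A} {x y : A ⊕ B} (h₁ : Step H (Sum.inl a) x) (h₂ : Step H x y)
    (h₃ : Step H y (Sum.inl a')) : Step G a a' := by
  rcases x with a₁ | b₁ <;> rcases y with a₂ | b₂
  · rw [eq_of_step_inl_inl hbipA h₁, eq_of_step_inl_inl hbipA h₂, eq_of_step_inl_inl hbipA h₃]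
    exact step_refl _
  · rw [eq_of_step_inl_inl hbipA h₁]
    exact step_of_adj_of_adj hG (adj_of_step_inl_inr h₂) (adj_of_step_inl_inr h₃.symm)
  · rw [← eq_of_step_inl_inl hbipA h₃]
    exact step_of_adj_of_adj hG (adj_of_step_inl_inr h₁) (adj_of_step_inl_inr h₂.symm)
  · rw [eq_of_step_inr_inr hbipB h₂] at h₁
    exact step_of_adj_of_adj hG (adj_of_step_inl_inr h₁) (adj_of_step_inl_inr h₃.symm)

def anchor (π : B → A) : A ⊕ B → A ⊕ B → A
  | _, Sum.inl a => a
  | Sum.inl a, Sum.inr _ => a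
  | Sum.inr b, Sum.inr _ => π b

theorem step_anchor (hbipB : ∀ b b' : B, ¬H.Adj (Sum.inr b) (Sum.inr b'))
    {π : B → A} (hπ : ∀ b, H.Adj (Sum.inr b) (Sum.inl (π b))) {y z : A ⊕ B}
    (h : Step H y z) :
    Step H (Sum.inl (anchor π y z)) y ∧ Step H (Sum.inl (anchor π y z)) z := by
  rcases y with a | b <;> rcases z with a' | b'
  · exact ⟨h.symm, step_refl _⟩
  · exact ⟨step_refl _, h⟩
  · exact ⟨h.symm, step_refl _⟩
  · obtain rfl := eq_of_step_inr_inr hbipB h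
    exact ⟨Or.inr (hπ b).symm, Or.inr (hπ b).symm⟩

open Classical in
variable (H) in
noncomputable def bridge (u v : A) : A ⊕ B :=
  if h : ∃ b : B, H.Adj (Sum.inl u) (Sum.inr b) ∧ H.Adj (Sum.inl v) (Sum.inr b)
  then Sum.inr h.choose else Sum.inl u

theorem step_bridge_left (u v : A) : Step H (Sum.inl u) (bridge H u v) := by
  unfold bridge
  split_ifs with h
  · exact Or.inr h.choose_spec.1
  · exact step_refl _

theorem step_bridge_right
    (hG : ∀ u v : A, G.Adj u v ↔
      u ≠ v ∧ ∃ b : B, H.Adj (Sum.inl u) (Sum.inr b) ∧ H.Adj (Sum.inl v) (Sum.inr b))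
    {u v : A} (huv : Step G u v) : Step H (bridge H u v) (Sum.inl v) := by
  unfold bridge
  split_ifs with h
  · exact Or.inr h.choose_spec.2.symm
  · rcases huv with rfl | huv
    · exact step_refl _
    · exact absurd ((hG u v).mp huv).2 h

/-- The truncated `n / 2 - 1` makes the lifted robber start at `bridge H (r 0) (r 0)`. -/
noncomputable def liftTrajectory (H : SimpleGraph (A ⊕ B)) (r : ℕ → A) (n : ℕ) : A ⊕ B :=
  if n % 2 = 0 then bridge H (r (n / 2 - 1)) (r (n / 2)) else Sum.inl (r (n / 2))

theorem liftTrajectory_two_mul (r : ℕ → A) (t : ℕ) :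
    liftTrajectory H r (2 * t) = bridge H (r (t - 1)) (r t) := by
  simp [liftTrajectory]

theorem liftTrajectory_two_mul_add_one (r : ℕ → A) (t : ℕ) :
    liftTrajectory H r (2 * t + 1) = Sum.inl (r t) := by
  simp [liftTrajectory, Nat.add_mod, Nat.add_div]

theorem IsTrajectory.liftTrajectory
    (hG : ∀ u v : A, G.Adj u v ↔
      u ≠ v ∧ ∃ b : B, H.Adj (Sum.inl u) (Sum.inr b) ∧ H.Adj (Sum.inl v) (Sum.inr b))
    {r : ℕ → A} (hr : IsTrajectory G r) : IsTrajectory H (liftTrajectory H r) := by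
  intro n
  obtain ⟨t, rfl | rfl⟩ := Nat.even_or_odd' n
  · rw [liftTrajectory_two_mul, liftTrajectory_two_mul_add_one]
    refine step_bridge_right hG ?_
    rcases t with _ | t
    · exact step_refl _
    · exact hr t
  · rw [liftTrajectory_two_mul_add_one, show 2 * t + 1 + 1 = 2 * (t + 1) by ring,
      liftTrajectory_two_mul]
    exact step_bridge_left _ _

variable (H) in
noncomputable def liftHistory (l : List A) : List (A ⊕ B) :=
  l.reverseRecOn [] fun l x e => e ++ [bridge H (l.getLast?.getD x) x, Sum.inl x]

theorem liftHistory_append_singleton (l : List A) (x : A) :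
    liftHistory H (l ++ [x]) =
      liftHistory H l ++ [bridge H (l.getLast?.getD x) x, Sum.inl x] := by
  simp only [liftHistory, List.reverseRecOn_concat]

theorem liftHistory_history (r : ℕ → A) (t : ℕ) :
    liftHistory H (history r t) = history (liftTrajectory H r) (2 * t) := by
  induction t with
  | zero => simp [history, liftHistory]
  | succ t ih =>
    have hlast : (history r t).getLast?.getD (r t) = r (t - 1) := by
      rcases t with _ | t
      · rfl
      · simp [history_succ]
    rw [history_succ, liftHistory_append_singleton, ih, hlast,
      show 2 * (t + 1) = 2 * t + 1 + 1 by ring, history_succ, history_succ,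
      liftTrajectory_two_mul, liftTrajectory_two_mul_add_one, List.append_assoc]
    rfl

theorem CopsWin.of_bipartite_square (hbipA : ∀ a a' : A, ¬H.Adj (Sum.inl a) (Sum.inl a'))
    (hbipB : ∀ b b' : B, ¬H.Adj (Sum.inr b) (Sum.inr b'))
    (hcov : ∀ b : B, ∃ a : A, H.Adj (Sum.inr b) (Sum.inl a))
    (hG : ∀ u v : A, G.Adj u v ↔
      u ≠ v ∧ ∃ b : B, H.Adj (Sum.inl u) (Sum.inr b) ∧ H.Adj (Sum.inl v) (Sum.inr b))
    (hH : CopsWin H 0 p) : CopsWin G 0 p := by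
  obtain ⟨C, hC, hcatch⟩ := copsWin_zero_iff.mp hH
  choose π hπ using hcov
  have step₃ := @step_of_step_step_step _ _ _ _ hbipA hbipB hG
  set F : List A → Fin p → A := fun l i =>
    anchor π (C (liftHistory H l).dropLast i) (C (liftHistory H l) i)
  have hprev (l : List A) (i : Fin p) :
      Step H (C (liftHistory H l).dropLast i) (Sum.inl (F l i)) :=
    (step_anchor hbipB hπ (hC.step_dropLast _ i)).1.symm
  have hanchor (l : List A) (i : Fin p) : Step H (Sum.inl (F l i)) (C (liftHistory H l) i) :=
    (step_anchor hbipB hπ (hC.step_dropLast _ i)).2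
  refine copsWin_zero_iff.mpr ⟨F, fun l x i => ?_, fun r hr => ?_⟩
  · have hnext := hprev (l ++ [x]) i
    rw [liftHistory_append_singleton, List.dropLast_append_cons] at hnext
    exact step₃ (hanchor l i) (hC _ _ i) hnext
  · obtain ⟨n, i, hn⟩ := hcatch _ (hr.liftTrajectory hG)
    have hlift := liftTrajectory_two_mul_add_one (H := H) r
    obtain ⟨t, rfl | rfl⟩ := Nat.even_or_odd' n
    · refine ⟨t, i, step₃ (hanchor _ i) (liftHistory_history r t ▸ hn) ?_⟩
      rw [← hlift]
      exact hr.liftTrajectory hG _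
    · refine ⟨t, i, step₃ (hanchor _ i) ?_ (hlift t ▸ hn)⟩
      rw [liftHistory_history, history_succ]
      exact hC _ _ i

end BipartiteSquare

end CopsRobbers

open CopsRobbers in
theorem statement18_general {A B : Type} [Fintype A]
    (H : SimpleGraph (A ⊕ B))
    (hbipA : ∀ a a' : A, ¬H.Adj (Sum.inl a) (Sum.inl a'))
    (hbipB : ∀ b b' : B, ¬H.Adj (Sum.inr b) (Sum.inr b'))
    (hcov : ∀ b : B, ∃ a : A, H.Adj (Sum.inr b) (Sum.inl a))
    (G : SimpleGraph A)
    (hG : ∀ u v : A, G.Adj u v ↔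
      u ≠ v ∧ ∃ b : B, H.Adj (Sum.inl u) (Sum.inr b) ∧ H.Adj (Sum.inl v) (Sum.inr b)) :
    copNumber G 0 ≤ copNumber H 0 := by
  have hdom : CopsWin H 0 (Fintype.card A) := by
    refine copsWin_zero_of_dominating (fun i => Sum.inl ((Fintype.equivFin A).symm i)) ?_
    rintro (a | b)
    · exact ⟨Fintype.equivFin A a, by rw [Equiv.symm_apply_apply]; exact step_refl _⟩
    · obtain ⟨a, ha⟩ := hcov b
      exact ⟨Fintype.equivFin A a, by rw [Equiv.symm_apply_apply]; exact Or.inr ha.symm⟩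
  have hH : CopsWin H 0 (copNumber H 0) :=
    Nat.sInf_mem (s := {q | CopsWin H 0 q}) ⟨_, hdom⟩
  exact Nat.sInf_le (hH.of_bipartite_square hbipA hbipB hcov hG)

open CopsRobbers in
/-- Let `H` be a finite simple bipartite graph with parts `A` (= `V`) and `B` (= `F`) in
which every vertex of `B` has a neighbour in `A`, and let `G` be the graph on `A` in
which two distinct vertices are adjacent iff they have a common neighbour in `B`
(i.e. `G = H²[V]`).  Then `c(G) ≤ c(H)`. -/
theorem statement18 {A B : Type} [Fintype A] [Fintype B]
    (H : SimpleGraph (A ⊕ B))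
    (hbipA : ∀ a a' : A, ¬H.Adj (Sum.inl a) (Sum.inl a'))
    (hbipB : ∀ b b' : B, ¬H.Adj (Sum.inr b) (Sum.inr b'))
    (hcov : ∀ b : B, ∃ a : A, H.Adj (Sum.inr b) (Sum.inl a))
    (G : SimpleGraph A)
    (hG : ∀ u v : A, G.Adj u v ↔
      u ≠ v ∧ ∃ b : B, H.Adj (Sum.inl u) (Sum.inr b) ∧ H.Adj (Sum.inl v) (Sum.inr b)) :
    copNumber G 0 ≤ copNumber H 0 :=
  statement18_general H hbipA hbipB hcov G hG
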